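/- arXiv:1701.01967 — 3 statements merged into one kernel-verified Lean document; each statement's English description precedes it below -/
import Mathlib

section
/- Let X be a topological space and let Cap be an outer measure on X (so Cap(∅) = 0, Cap is monotone and countably subadditive). Let f : X → ℝ be Cap-quasi-continuous, meaning: for every ε > 0 there exists a closed set F ⊆ X with Cap(F) < ε such that the restriction of f to X \ F is continuous. Let O ⊆ X be an open set, and suppose there exists a closed set Z ⊆ X with Cap(Z) = 0 such that f(x) = 0 for every x ∈ O \ Z. Then Cap({x ∈ closure(O) : f(x) ≠ 0}) = 0. -/
open MeasureTheory ENNReal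

/-!
Given `ε > 0`, take `F` closed with `Cap F < ε` and `f` continuous off `F`. Off the closed set
`Z ∪ F`, the function `f` is continuous and vanishes on `O`, hence on `closure O` by continuity.
So the bad set lies in `Z ∪ F`, whose capacity is at most `Cap Z + Cap F < ε`.
-/

open Set in
theorem Set.MapsTo.closure_diff_of_continuousOn_compl {X Y : Type*} [TopologicalSpace X]
    [TopologicalSpace Y] {f : X → Y} {s F : Set X} {t : Set Y} (hF : IsClosed F)
    (hf : ContinuousOn f Fᶜ) (ht : IsClosed t) (h : MapsTo f (s \ F) t) :
    MapsTo f (closure s \ F) t := by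
  rintro x ⟨hxs, hxF⟩
  have hx : x ∈ closure (s \ F) := by
    rw [sdiff_eq, inter_comm]
    exact hF.isOpen_compl.inter_closure ⟨hxF, hxs⟩
  have hfx : ContinuousWithinAt f (s \ F) x :=
    (hf.continuousAt (hF.isOpen_compl.mem_nhds hxF)).continuousWithinAt
  exact ht.closure_subset (hfx.mem_closure hx h)

theorem MeasureTheory.OuterMeasure.eq_zero_of_forall_subset_lt {X : Type*}
    (μ : OuterMeasure X) {s : Set X} (h : ∀ ε : ℝ≥0∞, 0 < ε → ∃ t, s ⊆ t ∧ μ t < ε) :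
    μ s = 0 :=
  nonpos_iff_eq_zero.mp <| le_of_forall_gt fun ε hε =>
    let ⟨_, hst, htε⟩ := h ε hε
    (μ.mono hst).trans_lt htε

theorem quasicontinuous_zero_on_closure_general {X : Type*} [TopologicalSpace X]
    (Cap : MeasureTheory.OuterMeasure X) (f : X → ℝ)
    (hqc : ∀ ε : ℝ≥0∞, 0 < ε → ∃ F : Set X, IsClosed F ∧ Cap F < ε ∧ ContinuousOn f Fᶜ)
    (O : Set X)
    (hZ : ∃ Z : Set X, IsClosed Z ∧ Cap Z = 0 ∧ ∀ x ∈ O \ Z, f x = 0) :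
    Cap {x ∈ closure O | f x ≠ 0} = 0 := by
  obtain ⟨Z, hZc, hZ0, hZf⟩ := hZ
  refine Cap.eq_zero_of_forall_subset_lt fun ε hε => ?_
  obtain ⟨F, hFc, hFε, hFcont⟩ := hqc ε hε
  have hf0 : Set.MapsTo f (closure O \ (Z ∪ F)) {0} :=
    Set.MapsTo.closure_diff_of_continuousOn_compl (hZc.union hFc)
      (hFcont.mono (Set.compl_subset_compl.mpr Set.subset_union_right)) isClosed_singleton
      fun x hx => hZf x ⟨hx.1, fun hxZ => hx.2 (Or.inl hxZ)⟩
  refine ⟨Z ∪ F, fun x ⟨hxO, hfx⟩ => by_contra fun hxZF => hfx (hf0 ⟨hxO, hxZF⟩), ?_⟩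
  calc Cap (Z ∪ F) ≤ Cap Z + Cap F := measure_union_le Z F
    _ = Cap F := by rw [hZ0, zero_add]
    _ < ε := hFε

/-- Lemma 2.5 in abstract outer-measure form: if `f` is `Cap`-quasi-continuous and
vanishes on an open set `O` outside a closed set of capacity zero, then the set of
points of `closure O` where `f` does not vanish has capacity zero. -/
theorem quasicontinuous_zero_on_closure {X : Type*} [TopologicalSpace X]
    (Cap : MeasureTheory.OuterMeasure X) (f : X → ℝ)
    (hqc : ∀ ε : ℝ≥0∞, 0 < ε → ∃ F : Set X, IsClosed F ∧ Cap F < ε ∧ ContinuousOn f Fᶜ)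
    (O : Set X) (hO : IsOpen O)
    (hZ : ∃ Z : Set X, IsClosed Z ∧ Cap Z = 0 ∧ ∀ x ∈ O \ Z, f x = 0) :
    Cap {x ∈ closure O | f x ≠ 0} = 0 :=
  quasicontinuous_zero_on_closure_general Cap f hqc O hZ
end

section
/- Let X be a measurable space, let g : X → [0, ∞] be a measurable function, and let (ν_j)_{j ∈ ℕ} and ν_∞ be measures on X. Suppose that for every s ∈ (0, ∞), ν_j({x ∈ X : g(x) > s}) converges to ν_∞({x ∈ X : g(x) > s}) as j → ∞ (convergence in [0, ∞]). Then liminf_{j→∞} ∫ g dν_j ≥ ∫ g dν_∞, where the integrals are Lebesgue integrals of a nonnegative function (possibly equal to +∞). -/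
/-!
By the layer-cake formula `∫⁻ g ∂μ = ∫⁻ t in Ioi 0, μ {g > t}`, valid for `ℝ≥0∞`-valued `g` and
arbitrary `μ`, the claim is Fatou's lemma on `Ioi 0` for the functions `t ↦ ν j {g > t}`,
which converge pointwise to `t ↦ νinf {g > t}`.
-/

open MeasureTheory Filter ENNReal Set

section LayerCake

variable {X : Type*} [MeasurableSpace X]

theorem antitone_measure_ofReal_lt (μ : Measure X) (g : X → ℝ≥0∞) :
    Antitone fun t : ℝ => μ {x | ENNReal.ofReal t < g x} :=
  fun _ _ hst => measure_mono fun _ hx => (ofReal_le_ofReal hst).trans_lt hx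

/-- If `g` is infinite on a set of positive measure, both sides are `∞`; otherwise `g` is a.e.
the `ofReal` of a real function and the real layer-cake formula applies. -/
theorem lintegral_eq_lintegral_meas_ofReal_lt (μ : Measure X) {g : X → ℝ≥0∞}
    (hg : AEMeasurable g μ) :
    ∫⁻ x, g x ∂μ = ∫⁻ t in Ioi (0 : ℝ), μ {x | ENNReal.ofReal t < g x} := by
  by_cases htop : μ {x | g x = ∞} = 0
  · have hfin : ∀ᵐ x ∂μ, g x ≠ ∞ := measure_eq_zero_iff_ae_notMem.1 htop
    calc ∫⁻ x, g x ∂μ = ∫⁻ x, ENNReal.ofReal (g x).toReal ∂μ :=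
          lintegral_congr_ae (hfin.mono fun x hx => (ofReal_toReal hx).symm)
      _ = ∫⁻ t in Ioi (0 : ℝ), μ {x | t < (g x).toReal} :=
          lintegral_eq_lintegral_meas_lt μ (ae_of_all _ fun _ => toReal_nonneg) hg.ennreal_toReal
      _ = ∫⁻ t in Ioi (0 : ℝ), μ {x | ENNReal.ofReal t < g x} := by
          refine setLIntegral_congr_fun measurableSet_Ioi fun t ht => measure_congr ?_
          filter_upwards [hfin] with x hx
          exact propext (ofReal_lt_iff_lt_toReal (le_of_lt ht) hx).symm
  · rw [lintegral_eq_top_of_measure_eq_top_ne_zero hg htop, eq_comm, eq_top_iff]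
    calc ∞ = ∫⁻ _ in Ioi (0 : ℝ), μ {x | g x = ∞} := by
          rw [setLIntegral_const, Real.volume_Ioi, mul_top htop]
      _ ≤ ∫⁻ t in Ioi (0 : ℝ), μ {x | ENNReal.ofReal t < g x} :=
          lintegral_mono fun t => measure_mono fun x (hx : g x = ∞) =>
            show ENNReal.ofReal t < g x from hx ▸ ofReal_lt_top

end LayerCake

/-- Lemma A.3: a variant of Fatou's lemma for a sequence of measures whose values on
all superlevel sets of `g` converge. -/
theorem lintegral_le_liminf_of_tendsto_measure_superlevel {X : Type*} [MeasurableSpace X]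
    (g : X → ℝ≥0∞) (hg : Measurable g)
    (ν : ℕ → Measure X) (νinf : Measure X)
    (h : ∀ s : ℝ≥0∞, 0 < s → s < ⊤ →
      Tendsto (fun j => ν j {x | s < g x}) atTop (nhds (νinf {x | s < g x}))) :
    ∫⁻ x, g x ∂νinf ≤ atTop.liminf (fun j => ∫⁻ x, g x ∂(ν j)) := by
  simp_rw [lintegral_eq_lintegral_meas_ofReal_lt _ hg.aemeasurable]
  calc ∫⁻ t in Ioi (0 : ℝ), νinf {x | ENNReal.ofReal t < g x}
      = ∫⁻ t in Ioi (0 : ℝ), atTop.liminf fun j => ν j {x | ENNReal.ofReal t < g x} :=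
        setLIntegral_congr_fun measurableSet_Ioi fun t ht =>
          (h _ (ofReal_pos.2 ht) ofReal_lt_top).liminf_eq.symm
    _ ≤ atTop.liminf fun j => ∫⁻ t in Ioi (0 : ℝ), ν j {x | ENNReal.ofReal t < g x} :=
        lintegral_liminf_le' fun j => (antitone_measure_ofReal_lt (ν j) g).measurable.aemeasurable
end

section
/- Let (X, d) be a metric space, μ a Borel measure on X, p ∈ X and k > 0 a real number. Suppose the k-dimensional density limit exists and is finite and positive: lim_{r→0+} μ(B_r(p))/r^k = c for some c ∈ (0, ∞). Define b(p,r) := ∫_{B_r(p)} (1 − d(p,x)/r) dμ(x). Then lim_{r→0+} b(p,r)/r^k = c/(k+1). -/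
/-!
By the layer-cake formula, `b(p,r) = ∫₀¹ μ(B_{(1-t)r}(p)) dt`, so `b(p,r)/r^k` is the integral over
`t ∈ (0,1)` of `μ(B_{(1-t)r}(p))/((1-t)r)^k · (1-t)^k`. As `r → 0` the first factor tends to `c`
and is bounded for small `r`, uniformly in `t`, so dominated convergence gives the limit
`c ∫₀¹ (1-t)^k dt = c/(k+1)`.
-/

open MeasureTheory Metric Filter ENNReal Set Topology

theorem setLIntegral_ball_ofReal_one_sub_dist_div {X : Type*} [PseudoMetricSpace X]
    [MeasurableSpace X] [OpensMeasurableSpace X] (μ : Measure X) (p : X) {r : ℝ} (hr : 0 < r) :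
    ∫⁻ x in ball p r, ENNReal.ofReal (1 - dist p x / r) ∂μ
      = ∫⁻ t in Ioo 0 1, μ (ball p ((1 - t) * r)) := by
  have hlevel : ∀ t : ℝ, {x | t < 1 - dist p x / r} = ball p ((1 - t) * r) := by
    intro t
    ext x
    rw [mem_ofPred_eq, mem_ball, dist_comm, ← div_lt_iff₀ hr]
    constructor <;> intro <;> linarith
  have hempty : ∀ t, 1 ≤ t → {x | t < 1 - dist p x / r} = ∅ := by
    intro t ht
    refine eq_empty_of_forall_notMem fun x (hx : t < 1 - dist p x / r) => ?_
    have : 0 ≤ dist p x / r := by positivity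
    linarith
  have hnonneg : 0 ≤ᵐ[μ.restrict (ball p r)] fun x => 1 - dist p x / r := by
    refine ae_restrict_of_forall_mem measurableSet_ball fun x hx => ?_
    rw [mem_ball, dist_comm, ← div_lt_one hr] at hx
    simp only [Pi.zero_apply]
    linarith
  have hdistrib : ∀ t ∈ Ioi (0 : ℝ), μ.restrict (ball p r) {x | t < 1 - dist p x / r}
      = (Ioo 0 1).indicator (fun t => μ (ball p ((1 - t) * r))) t := by
    intro t ht
    by_cases ht1 : t < 1
    · rw [indicator_of_mem (show t ∈ Ioo 0 1 from ⟨ht, ht1⟩), hlevel t,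
        Measure.restrict_apply measurableSet_ball, inter_eq_left.mpr
          (ball_subset_ball (mul_le_of_le_one_left hr.le (by linarith [ht.out])))]
    · rw [indicator_of_notMem (fun h => ht1 h.2), hempty t (not_lt.mp ht1), measure_empty]
  rw [lintegral_eq_lintegral_meas_lt _ hnonneg (by fun_prop),
    setLIntegral_congr_fun measurableSet_Ioi hdistrib, lintegral_indicator measurableSet_Ioo,
    Measure.restrict_restrict measurableSet_Ioo, inter_eq_left.mpr Ioo_subset_Ioi_self]

theorem setLIntegral_Ioo_ofReal_one_sub_rpow {k : ℝ} (hk : -1 < k) :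
    ∫⁻ t in Ioo 0 1, ENNReal.ofReal ((1 - t) ^ k) = (ENNReal.ofReal (k + 1))⁻¹ := by
  have hk1 : 0 < k + 1 := by linarith
  have hint : IntervalIntegrable (fun t : ℝ => (1 - t) ^ k) volume 0 1 := by
    simpa using (intervalIntegral.intervalIntegrable_rpow' hk (a := 1) (b := 0)).comp_sub_left 1
  have hval : ∫ t in (0 : ℝ)..1, (1 - t) ^ k = (k + 1)⁻¹ := by
    rw [intervalIntegral.integral_comp_sub_left (fun x : ℝ => x ^ k) 1, sub_self, sub_zero,
      integral_rpow (Or.inl hk), Real.one_rpow, Real.zero_rpow hk1.ne']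
    ring
  rw [← ofReal_integral_eq_lintegral_ofReal
      ((intervalIntegrable_iff_integrableOn_Ioo_of_le zero_le_one).mp hint)
      (ae_restrict_of_forall_mem measurableSet_Ioo fun t ht =>
        Real.rpow_nonneg (by linarith [ht.2]) k),
    ← integral_Ioc_eq_integral_Ioo, ← intervalIntegral.integral_of_le zero_le_one, hval,
    ENNReal.ofReal_inv_of_pos hk1]

theorem Filter.Tendsto.comp_const_mul_nhdsGT_zero {α : Type*} {g : ℝ → α} {l : Filter α}
    (hg : Tendsto g (𝓝[>] 0) l) {a : ℝ} (ha : 0 < a) :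
    Tendsto (fun r => g (a * r)) (𝓝[>] 0) l := by
  have hscale := tendsto_comap (f := fun r : ℝ => a * r) (x := 𝓝[>] 0)
  rw [comap_mulLeft_nhdsGT_zero ha] at hscale
  exact hg.comp hscale

theorem div_ofReal_rpow_eq_div_mul {a b : ℝ} (ha : 0 < a) (hb : 0 < b) (k : ℝ) (x : ℝ≥0∞) :
    x / ENNReal.ofReal (a ^ k)
      = x / ENNReal.ofReal ((b * a) ^ k) * ENNReal.ofReal (b ^ k) := by
  have hb0 : ENNReal.ofReal (b ^ k) ≠ 0 := by simpa using Real.rpow_pos_of_pos hb k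
  rw [Real.mul_rpow hb.le ha.le, ENNReal.ofReal_mul (by positivity), ← ENNReal.mul_div_right_comm,
    mul_comm (ENNReal.ofReal _), ENNReal.mul_div_mul_right _ _ hb0 ofReal_ne_top]

theorem tendsto_setLIntegral_Ioo_comp_mul_div_rpow {f : ℝ → ℝ≥0∞} (hf : Monotone f) {k : ℝ}
    (hk : 0 ≤ k) {c : ℝ≥0∞} (hc : c ≠ ∞)
    (hlim : Tendsto (fun ρ => f ρ / ENNReal.ofReal (ρ ^ k)) (𝓝[>] 0) (𝓝 c)) :
    Tendsto (fun r => (∫⁻ t in Ioo 0 1, f ((1 - t) * r)) / ENNReal.ofReal (r ^ k))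
      (𝓝[>] 0) (𝓝 (c / ENNReal.ofReal (k + 1))) := by
  set F : ℝ → ℝ → ℝ≥0∞ := fun r t => f ((1 - t) * r) / ENNReal.ofReal (r ^ k)
  have hF : ∀ r > 0, ∀ t ∈ Ioo (0 : ℝ) 1, F r t
      = f ((1 - t) * r) / ENNReal.ofReal (((1 - t) * r) ^ k) * ENNReal.ofReal ((1 - t) ^ k) :=
    fun r hr t ht => div_ofReal_rpow_eq_div_mul hr (sub_pos.mpr ht.2) k _
  have hF_meas : ∀ r > 0, Measurable (F r) := fun r hr =>
    (hf.comp_antitone fun t₁ t₂ h => by gcongr).measurable.div_const _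
  obtain ⟨ε, hε, hbound⟩ := mem_nhdsGT_iff_exists_Ioo_subset.mp <|
    hlim.eventually_lt_const (lt_add_right hc one_ne_zero)
  have hF_le : ∀ r ∈ Ioo 0 ε, ∀ t ∈ Ioo (0 : ℝ) 1, F r t ≤ c + 1 := by
    intro r hr t ht
    have h1t : 0 < 1 - t := sub_pos.mpr ht.2
    calc F r t
        = f ((1 - t) * r) / ENNReal.ofReal (((1 - t) * r) ^ k) * ENNReal.ofReal ((1 - t) ^ k) :=
          hF r hr.1 t ht
      _ ≤ (c + 1) * 1 := by
          gcongr
          · exact (hbound ⟨mul_pos h1t hr.1,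
              (mul_lt_of_lt_one_left hr.1 (by linarith [ht.1])).trans hr.2⟩).le
          · exact ofReal_le_one.mpr (Real.rpow_le_one h1t.le (by linarith [ht.1]) hk)
      _ = c + 1 := mul_one _
  have hF_tendsto : ∀ t ∈ Ioo (0 : ℝ) 1,
      Tendsto (fun r => F r t) (𝓝[>] 0) (𝓝 (c * ENNReal.ofReal ((1 - t) ^ k))) := by
    intro t ht
    refine (ENNReal.Tendsto.mul_const (hlim.comp_const_mul_nhdsGT_zero (sub_pos.mpr ht.2))
      (Or.inr ofReal_ne_top)).congr' ?_
    filter_upwards [self_mem_nhdsWithin] with r hr using (hF r hr t ht).symm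
  have hdom := tendsto_lintegral_filter_of_dominated_convergence
    (μ := volume.restrict (Ioo 0 1)) (l := 𝓝[>] 0) (fun _ => c + 1)
    (eventually_nhdsWithin_of_forall hF_meas)
    (by
      filter_upwards [Ioo_mem_nhdsGT hε] with r hr
      exact (ae_restrict_iff' measurableSet_Ioo).mpr (ae_of_all _ (hF_le r hr)))
    (by simpa [setLIntegral_const] using add_ne_top.mpr ⟨hc, one_ne_top⟩)
    ((ae_restrict_iff' measurableSet_Ioo).mpr (ae_of_all _ hF_tendsto))
  rw [lintegral_const_mul' _ _ hc, setLIntegral_Ioo_ofReal_one_sub_rpow (by linarith),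
    ← div_eq_mul_inv] at hdom
  refine hdom.congr' (eventually_nhdsWithin_of_forall fun r hr => ?_)
  have hr0 : ENNReal.ofReal (r ^ k) ≠ 0 := by simpa using Real.rpow_pos_of_pos hr k
  simp only [F, div_eq_mul_inv]
  rw [lintegral_mul_const' _ _ (inv_ne_top.mpr hr0)]

theorem tendsto_b_div_rpow_general {X : Type*} [MetricSpace X] [MeasurableSpace X]
    [BorelSpace X] (μ : Measure X) (p : X) (k : ℝ) (hk : 0 < k)
    (c : ℝ≥0∞) (hctop : c < ⊤)
    (hdens : Tendsto (fun r : ℝ => μ (ball p r) / ENNReal.ofReal (r ^ k))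
      (nhdsWithin 0 (Set.Ioi 0)) (nhds c)) :
    Tendsto (fun r : ℝ =>
        (∫⁻ x in ball p r, ENNReal.ofReal (1 - dist p x / r) ∂μ) / ENNReal.ofReal (r ^ k))
      (nhdsWithin 0 (Set.Ioi 0)) (nhds (c / ENNReal.ofReal (k + 1))) := by
  have hmono : Monotone fun ρ => μ (ball p ρ) := fun _ _ h => measure_mono (ball_subset_ball h)
  refine (tendsto_setLIntegral_Ioo_comp_mul_div_rpow hmono hk.le hctop.ne hdens).congr' ?_
  filter_upwards [self_mem_nhdsWithin] with r hr
  rw [setLIntegral_ball_ofReal_one_sub_dist_div μ p hr]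

/-- Lemma 4.3: if the `k`-dimensional density `lim_{r→0} μ(B_r(p))/r^k = c ∈ (0,∞)`
exists, then `b(p,r) := ∫_{B_r(p)} (1 − d(p,x)/r) dμ` satisfies
`lim_{r→0} b(p,r)/r^k = c/(k+1)`. -/
theorem tendsto_b_div_rpow {X : Type*} [MetricSpace X] [MeasurableSpace X]
    [BorelSpace X] (μ : Measure X) (p : X) (k : ℝ) (hk : 0 < k)
    (c : ℝ≥0∞) (hc0 : 0 < c) (hctop : c < ⊤)
    (hdens : Tendsto (fun r : ℝ => μ (ball p r) / ENNReal.ofReal (r ^ k))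
      (nhdsWithin 0 (Set.Ioi 0)) (nhds c)) :
    Tendsto (fun r : ℝ =>
        (∫⁻ x in ball p r, ENNReal.ofReal (1 - dist p x / r) ∂μ) / ENNReal.ofReal (r ^ k))
      (nhdsWithin 0 (Set.Ioi 0)) (nhds (c / ENNReal.ofReal (k + 1))) :=
  tendsto_b_div_rpow_general μ p k hk c hctop hdens
end
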